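/- arXiv:1612.07623 — 2 statements merged into one kernel-verified Lean document; each statement's English description precedes it below -/
import Mathlib

section
/- Let (X,d) be a proper geodesic metric space, φ : X → ℝ a Kantorovich potential, and s, t ∈ (0,1). If γ¹, γ² are φ-Kantorovich geodesics with γ¹_t = γ²_t, then φ_s(γ¹_s) = φ_s(γ²_s). Consequently, for a_s ≠ b_s, no point of X is simultaneously the time-t point of a φ-Kantorovich geodesic γ with φ_s(γ_s) = a_s and of one with φ_s(γ_s) = b_s. -/
/-- `ψ` is pointwise the `c`-transform of `φ` for the cost `c = d²/2`:
at every point `x`, `ψ x` is a genuine (finite) infimum of `d(x,y)²/2 - φ(y)` over `y`. -/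
def IsCTransform {X : Type*} [MetricSpace X] (φ ψ : X → ℝ) : Prop :=
  ∀ x : X, IsGLB {v : ℝ | ∃ y : X, v = dist x y ^ 2 / 2 - φ y} (ψ x)

/-- `φ` is a Kantorovich potential with (real-valued) conjugate potential `φc`. -/
def IsKantorovichPair {X : Type*} [MetricSpace X] (φ φc : X → ℝ) : Prop :=
  IsCTransform φ φc ∧ IsCTransform φc φ

/-- A constant-speed geodesic parametrized on `[0,1]`. -/
def IsGeodesic {X : Type*} [MetricSpace X] (γ : ℝ → X) : Prop :=
  ∀ s ∈ Set.Icc (0:ℝ) 1, ∀ t ∈ Set.Icc (0:ℝ) 1,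
    dist (γ s) (γ t) = |s - t| * dist (γ 0) (γ 1)

/-- A `φ`-Kantorovich geodesic: a geodesic with `φ(γ₀) + φ^c(γ₁) = ℓ(γ)²/2`,
where `ℓ(γ) = d(γ₀,γ₁)`. -/
def IsKantorovichGeodesic {X : Type*} [MetricSpace X] (φ φc : X → ℝ) (γ : ℝ → X) : Prop :=
  IsGeodesic γ ∧ φ (γ 0) + φc (γ 1) = dist (γ 0) (γ 1) ^ 2 / 2

/-- A metric space is geodesic if every pair of points is joined by a geodesic. -/
def IsGeodesicSpace (X : Type*) [MetricSpace X] : Prop :=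
  ∀ x y : X, ∃ γ : ℝ → X, IsGeodesic γ ∧ γ 0 = x ∧ γ 1 = y

/-- The interpolating intermediate-time Kantorovich potential
`φ_t(x) = -inf_y (d(x,y)²/(2t) - φ(y))` for `t ≠ 0`, and `φ_0 = φ`. -/
noncomputable def interpPotential {X : Type*} [MetricSpace X] (φ : X → ℝ) (t : ℝ) (x : X) : ℝ :=
  if t = 0 then φ x
  else -sInf {v : ℝ | ∃ y : X, v = dist x y ^ 2 / (2 * t) - φ y}

/-- The time-reversed interpolating Kantorovich potential
`φ̄_t(x) = inf_y (d(x,y)²/(2(1-t)) - φ^c(y))` for `t ≠ 1`, and `φ̄_1 = -φ^c`. -/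
noncomputable def reversePotential {X : Type*} [MetricSpace X] (φc : X → ℝ) (t : ℝ) (x : X) : ℝ :=
  if t = 1 then -φc x
  else sInf {v : ℝ | ∃ y : X, v = dist x y ^ 2 / (2 * (1 - t)) - φc y}


/-! Along a `φ`-Kantorovich geodesic of length `ℓ` the interpolating potential is explicit,
`φ_r(γ_r) = φ(γ_0) - r ℓ² / 2`: the infimum defining it is attained at `γ_0`, and the `c`-concavity
bound `φ(y) ≤ d(y, γ_1)²/2 - φ^c(γ_1)` combined with the triangle inequality through `γ_r` shows
nothing is smaller. Two Kantorovich geodesics crossing at an interior time `t` have the same length: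
crossing the endpoints and using the triangle inequality through the common point gives
`t (1 - t) (ℓ₁ - ℓ₂)² ≤ 0`. Hence `φ_s(γ_s) = φ_t(γ_t) + (t - s) ℓ² / 2` depends only on `γ_t`. -/

section KantorovichGeodesic

variable {X : Type*} [MetricSpace X] {φ φc : X → ℝ} {γ : ℝ → X}

lemma IsCTransform.le_sub {ψ : X → ℝ} (h : IsCTransform ψ φ) (x y : X) :
    φ x ≤ dist x y ^ 2 / 2 - ψ y :=
  (h x).1 ⟨y, rfl⟩

lemma IsGeodesic.dist_zero_left (hγ : IsGeodesic γ) {r : ℝ} (hr : r ∈ Set.Icc (0:ℝ) 1) :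
    dist (γ 0) (γ r) = r * dist (γ 0) (γ 1) := by
  rw [hγ 0 (Set.left_mem_Icc.2 zero_le_one) r hr, zero_sub, abs_neg, abs_of_nonneg hr.1]

lemma IsGeodesic.dist_one_right (hγ : IsGeodesic γ) {r : ℝ} (hr : r ∈ Set.Icc (0:ℝ) 1) :
    dist (γ r) (γ 1) = (1 - r) * dist (γ 0) (γ 1) := by
  rw [hγ r hr 1 (Set.right_mem_Icc.2 zero_le_one), abs_sub_comm, abs_of_nonneg (sub_nonneg.2 hr.2)]

lemma IsKantorovichGeodesic.interpPotential_eq (hφ : IsCTransform φc φ)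
    (hγ : IsKantorovichGeodesic φ φc γ) {r : ℝ} (hr : r ∈ Set.Ioc (0:ℝ) 1) :
    interpPotential φ r (γ r) = φ (γ 0) - r * dist (γ 0) (γ 1) ^ 2 / 2 := by
  obtain ⟨hgeod, hk⟩ := hγ
  obtain ⟨hr0, hr1⟩ := hr
  set ℓ := dist (γ 0) (γ 1)
  have hrI : r ∈ Set.Icc (0:ℝ) 1 := ⟨hr0.le, hr1⟩
  have hleast : IsLeast {v : ℝ | ∃ y : X, v = dist (γ r) y ^ 2 / (2 * r) - φ y}
      (r * ℓ ^ 2 / 2 - φ (γ 0)) := by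
    refine ⟨⟨γ 0, ?_⟩, ?_⟩
    · have hdist : dist (γ r) (γ 0) = r * ℓ := by rw [dist_comm, hgeod.dist_zero_left hrI]
      rw [hdist]
      field_simp
    · rintro _ ⟨y, rfl⟩
      set D := dist (γ r) y
      have hφy := hφ.le_sub y (γ 1)
      have htri : dist y (γ 1) ≤ D + (1 - r) * ℓ := by
        calc dist y (γ 1) ≤ dist y (γ r) + dist (γ r) (γ 1) := dist_triangle _ _ _
          _ = D + (1 - r) * ℓ := by rw [dist_comm y, hgeod.dist_one_right hrI]
      have hsq : dist y (γ 1) ^ 2 ≤ (D + (1 - r) * ℓ) ^ 2 :=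
        pow_le_pow_left₀ dist_nonneg htri 2
      -- `D² - r (D + (1 - r) ℓ)² + r (1 - r) ℓ² = (1 - r) (D - r ℓ)²`
      have hgap : 0 ≤ (1 - r) * (D - r * ℓ) ^ 2 := mul_nonneg (by linarith) (sq_nonneg _)
      rw [le_sub_iff_add_le, le_div_iff₀ (by positivity)]
      nlinarith
  rw [interpPotential, if_neg hr0.ne', hleast.csInf_eq]
  ring

lemma IsKantorovichGeodesic.dist_eq_of_apply_eq (hφ : IsCTransform φc φ) {γ₁ γ₂ : ℝ → X}
    (h₁ : IsKantorovichGeodesic φ φc γ₁) (h₂ : IsKantorovichGeodesic φ φc γ₂)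
    {t : ℝ} (ht : t ∈ Set.Ioo (0:ℝ) 1) (hmeet : γ₁ t = γ₂ t) :
    dist (γ₁ 0) (γ₁ 1) = dist (γ₂ 0) (γ₂ 1) := by
  have htI : t ∈ Set.Icc (0:ℝ) 1 := Set.Ioo_subset_Icc_self ht
  set a := dist (γ₁ 0) (γ₁ 1)
  set b := dist (γ₂ 0) (γ₂ 1)
  have tri₁ : dist (γ₁ 0) (γ₂ 1) ≤ t * a + (1 - t) * b := by
    calc dist (γ₁ 0) (γ₂ 1) ≤ dist (γ₁ 0) (γ₁ t) + dist (γ₁ t) (γ₂ 1) := dist_triangle _ _ _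
      _ = t * a + (1 - t) * b := by
        rw [h₁.1.dist_zero_left htI, hmeet, h₂.1.dist_one_right htI]
  have tri₂ : dist (γ₂ 0) (γ₁ 1) ≤ t * b + (1 - t) * a := by
    calc dist (γ₂ 0) (γ₁ 1) ≤ dist (γ₂ 0) (γ₂ t) + dist (γ₂ t) (γ₁ 1) := dist_triangle _ _ _
      _ = t * b + (1 - t) * a := by
        rw [h₂.1.dist_zero_left htI, ← hmeet, h₁.1.dist_one_right htI]
  have sq₁ := pow_le_pow_left₀ dist_nonneg tri₁ 2
  have sq₂ := pow_le_pow_left₀ dist_nonneg tri₂ 2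
  have c₁ := hφ.le_sub (γ₁ 0) (γ₂ 1)
  have c₂ := hφ.le_sub (γ₂ 0) (γ₁ 1)
  have hk₁ : φ (γ₁ 0) + φc (γ₁ 1) = a ^ 2 / 2 := h₁.2
  have hk₂ : φ (γ₂ 0) + φc (γ₂ 1) = b ^ 2 / 2 := h₂.2
  have hsq : t * (1 - t) * (a - b) ^ 2 ≤ 0 := by nlinarith
  have hpos : 0 < t * (1 - t) := mul_pos ht.1 (sub_pos.2 ht.2)
  have : (a - b) ^ 2 = 0 :=
    le_antisymm (nonpos_of_mul_nonpos_right (by linarith) hpos) (sq_nonneg _)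
  exact sub_eq_zero.1 (pow_eq_zero_iff two_ne_zero |>.1 this)

lemma IsKantorovichGeodesic.interpPotential_eq_of_apply_eq (hφ : IsCTransform φc φ)
    {γ₁ γ₂ : ℝ → X} (h₁ : IsKantorovichGeodesic φ φc γ₁) (h₂ : IsKantorovichGeodesic φ φc γ₂)
    {s t : ℝ} (hs : s ∈ Set.Ioo (0:ℝ) 1) (ht : t ∈ Set.Ioo (0:ℝ) 1) (hmeet : γ₁ t = γ₂ t) :
    interpPotential φ s (γ₁ s) = interpPotential φ s (γ₂ s) := by
  have hlen := h₁.dist_eq_of_apply_eq hφ h₂ ht hmeet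
  have hpot_t : interpPotential φ t (γ₁ t) = interpPotential φ t (γ₂ t) := by rw [hmeet]
  rw [h₁.interpPotential_eq hφ (Set.Ioo_subset_Ioc_self ht),
    h₂.interpPotential_eq hφ (Set.Ioo_subset_Ioc_self ht), hlen] at hpot_t
  rw [h₁.interpPotential_eq hφ (Set.Ioo_subset_Ioc_self hs),
    h₂.interpPotential_eq hφ (Set.Ioo_subset_Ioc_self hs), hlen]
  linarith

end KantorovichGeodesic

theorem statement6_general {X : Type*} [MetricSpace X]
    (φ φc : X → ℝ) (hpair : IsKantorovichPair φ φc)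
    (s t : ℝ) (hs : s ∈ Set.Ioo (0:ℝ) 1) (ht : t ∈ Set.Ioo (0:ℝ) 1) :
    (∀ γ₁ γ₂ : ℝ → X, IsKantorovichGeodesic φ φc γ₁ → IsKantorovichGeodesic φ φc γ₂ →
        γ₁ t = γ₂ t → interpPotential φ s (γ₁ s) = interpPotential φ s (γ₂ s)) ∧
      (∀ a b : ℝ, a ≠ b → ¬∃ x : X,
        (∃ γ : ℝ → X, IsKantorovichGeodesic φ φc γ ∧ γ t = x ∧
          interpPotential φ s (γ s) = a) ∧
        (∃ γ : ℝ → X, IsKantorovichGeodesic φ φc γ ∧ γ t = x ∧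
          interpPotential φ s (γ s) = b)) := by
  have hmeet : ∀ γ₁ γ₂ : ℝ → X, IsKantorovichGeodesic φ φc γ₁ → IsKantorovichGeodesic φ φc γ₂ →
      γ₁ t = γ₂ t → interpPotential φ s (γ₁ s) = interpPotential φ s (γ₂ s) :=
    fun _ _ h₁ h₂ => h₁.interpPotential_eq_of_apply_eq hpair.2 h₂ hs ht
  refine ⟨hmeet, ?_⟩
  rintro a b hab ⟨x, ⟨γ₁, h₁, hx₁, rfl⟩, ⟨γ₂, h₂, hx₂, rfl⟩⟩
  exact hab (hmeet γ₁ γ₂ h₁ h₂ (hx₁.trans hx₂.symm))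

/-- On a proper geodesic space, for `s, t ∈ (0,1)`: if two `φ`-Kantorovich geodesics agree
at time `t`, then `φ_s` takes the same value at their time-`s` points. Consequently, for
`a ≠ b` no point of `X` is simultaneously the time-`t` point of a `φ`-Kantorovich geodesic
with `φ_s(γ_s) = a` and of one with `φ_s(γ_s) = b`. -/
theorem statement6 {X : Type*} [MetricSpace X] [ProperSpace X]
    (hgeo : IsGeodesicSpace X) (φ φc : X → ℝ) (hpair : IsKantorovichPair φ φc)
    (s t : ℝ) (hs : s ∈ Set.Ioo (0:ℝ) 1) (ht : t ∈ Set.Ioo (0:ℝ) 1) :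
    (∀ γ₁ γ₂ : ℝ → X, IsKantorovichGeodesic φ φc γ₁ → IsKantorovichGeodesic φ φc γ₂ →
        γ₁ t = γ₂ t → interpPotential φ s (γ₁ s) = interpPotential φ s (γ₂ s)) ∧
      (∀ a b : ℝ, a ≠ b → ¬∃ x : X,
        (∃ γ : ℝ → X, IsKantorovichGeodesic φ φc γ ∧ γ t = x ∧
          interpPotential φ s (γ s) = a) ∧
        (∃ γ : ℝ → X, IsKantorovichGeodesic φ φc γ ∧ γ t = x ∧
          interpPotential φ s (γ s) = b)) :=
  statement6_general φ φc hpair s t hs ht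
end

section
/- Let (X,d) be a geodesic metric space, φ : X → ℝ a Kantorovich potential, γ a φ-Kantorovich geodesic, and s ∈ [0,1]. Set a := φ_s(γ_s), f := φ_s − a (so {f = 0} contains γ_s), and let d_f be the signed distance function from {φ_s = a}. Then for all 0 ≤ r ≤ t ≤ 1: d_f(γ_r) − d_f(γ_t) = d(γ_r, γ_t). -/
/-- The signed distance function from the zero-level set of `f`:
`d_f(x) = sgn(f(x)) · dist(x, {f = 0})`. -/
noncomputable def signedDistFn {X : Type*} [MetricSpace X] (f : X → ℝ) (x : X) : ℝ :=
  Real.sign (f x) * Metric.infDist x {y | f y = 0}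
/-!
Write `ℓ = d(γ₀, γ₁)`. Testing the infimum defining `φ_s` at `γ₀` gives
`φ_s(x) ≥ φ(γ₀) - d(x, γ₀)²/(2s)`, while the c-transform relation and the weighted Cauchy–Schwarz
inequality `(a + b)²/2 ≤ a²/(2s) + b²/(2(1-s))` give `φ_s(x) ≤ d(x, γ₁)²/(2(1-s)) - φ^c(γ₁)`.
Since `φ(γ₀) + φ^c(γ₁) = ℓ²/2`, both bounds equal `a := φ(γ₀) - sℓ²/2` at `γ_s`, so `φ_s(γ_s) = a`;
moreover every point of `{φ_s = a}` is at distance `≥ sℓ` from `γ₀` and `≥ (1-s)ℓ` from `γ₁`.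
The triangle inequality then puts `γ_u` at distance exactly `|s - u|ℓ` from that level set, and the
same two bounds show `φ_s(γ_u) > a` for `u < s` and `φ_s(γ_u) < a` for `u > s` (when `ℓ > 0`).
Hence `d_f(γ_u) = (s - u)ℓ`.
-/

open Set

lemma add_sq_div_two_le (a b : ℝ) {s : ℝ} (hs0 : 0 < s) (hs1 : s < 1) :
    (a + b) ^ 2 / 2 ≤ a ^ 2 / (2 * s) + b ^ 2 / (2 * (1 - s)) := by
  have hs1' : 0 < 1 - s := sub_pos.2 hs1
  rw [div_add_div _ _ (by positivity) (by positivity), div_le_div_iff₀ two_pos (by positivity)]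
  nlinarith [sq_nonneg (a * (1 - s) - b * s)]

section CTransform

variable {X : Type*} [MetricSpace X] {φ ψ : X → ℝ} {s : ℝ}

theorem IsCTransform.le (h : IsCTransform φ ψ) (x y : X) : ψ x ≤ dist x y ^ 2 / 2 - φ y :=
  (h x).1 ⟨y, rfl⟩

theorem IsCTransform.interpPotential_one (h : IsCTransform φ ψ) (x : X) :
    interpPotential φ 1 x = -ψ x := by
  simp only [interpPotential, one_ne_zero, if_false, mul_one, (h x).csInf_eq ⟨_, x, rfl⟩]

theorem IsCTransform.bddBelow_interpPotential_set (h : IsCTransform φ ψ) (hs0 : 0 < s)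
    (hs1 : s ≤ 1) (x : X) : BddBelow {v : ℝ | ∃ y : X, v = dist x y ^ 2 / (2 * s) - φ y} := by
  refine ⟨ψ x, ?_⟩
  rintro v ⟨y, rfl⟩
  have : dist x y ^ 2 / 2 ≤ dist x y ^ 2 / (2 * s) :=
    div_le_div_of_nonneg_left (sq_nonneg _) (by positivity) (by linarith)
  linarith [h.le x y]

theorem IsCTransform.le_interpPotential (h : IsCTransform φ ψ) (hs0 : 0 < s) (hs1 : s ≤ 1)
    (x y : X) : φ y - dist x y ^ 2 / (2 * s) ≤ interpPotential φ s x := by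
  rw [interpPotential, if_neg hs0.ne']
  linarith [csInf_le (h.bddBelow_interpPotential_set hs0 hs1 x) ⟨y, rfl⟩]

theorem IsCTransform.interpPotential_le (h : IsCTransform φ ψ) (hs0 : 0 ≤ s) (hs1 : s < 1)
    (x y : X) : interpPotential φ s x ≤ dist x y ^ 2 / (2 * (1 - s)) - ψ y := by
  rcases hs0.eq_or_lt with rfl | hs0
  · have := h.le y x
    rw [dist_comm] at this
    simp only [interpPotential, if_pos, sub_zero, mul_one]
    linarith
  rw [interpPotential, if_neg hs0.ne', neg_le]
  refine le_csInf ⟨_, x, rfl⟩ ?_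
  rintro v ⟨w, rfl⟩
  have hcs := add_sq_div_two_le (dist x w) (dist x y) hs0 hs1
  have htri : dist y w ^ 2 ≤ (dist x w + dist x y) ^ 2 := by
    gcongr
    linarith [dist_triangle y x w, dist_comm x y]
  linarith [h.le y w]

theorem IsCTransform.mul_le_dist_of_interpPotential_le (h : IsCTransform φ ψ)
    (hs : s ∈ Icc (0 : ℝ) 1) {ℓ : ℝ} (hℓ : 0 ≤ ℓ) {y z : X}
    (hz : interpPotential φ s z ≤ φ y - s * ℓ ^ 2 / 2) : s * ℓ ≤ dist z y := by
  rcases hs.1.eq_or_lt with rfl | hs0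
  · simp
  have hlow := h.le_interpPotential hs0 hs.2 z y
  have hsq : (s * ℓ) ^ 2 ≤ dist z y ^ 2 := by
    have : s * ℓ ^ 2 / 2 ≤ dist z y ^ 2 / (2 * s) := by linarith
    rw [div_le_div_iff₀ two_pos (by positivity)] at this
    nlinarith
  exact (pow_le_pow_iff_left₀ (by positivity) dist_nonneg two_ne_zero).1 hsq

theorem IsCTransform.mul_le_dist_of_le_interpPotential (h : IsCTransform φ ψ)
    (hs : s ∈ Icc (0 : ℝ) 1) {ℓ : ℝ} (hℓ : 0 ≤ ℓ) {y z : X}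
    (hz : (1 - s) * ℓ ^ 2 / 2 - ψ y ≤ interpPotential φ s z) : (1 - s) * ℓ ≤ dist z y := by
  rcases hs.2.eq_or_lt with rfl | hs1
  · simp
  have hup := h.interpPotential_le hs.1 hs1 z y
  have hsq : ((1 - s) * ℓ) ^ 2 ≤ dist z y ^ 2 := by
    have : (1 - s) * ℓ ^ 2 / 2 ≤ dist z y ^ 2 / (2 * (1 - s)) := by linarith
    rw [div_le_div_iff₀ two_pos (by positivity)] at this
    nlinarith
  exact (pow_le_pow_iff_left₀ (by positivity) dist_nonneg two_ne_zero).1 hsq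

end CTransform

section Geodesic

variable {X : Type*} [MetricSpace X] {γ : ℝ → X} {u : ℝ}

theorem IsGeodesic.dist_zero (hγ : IsGeodesic γ) (hu : u ∈ Icc (0 : ℝ) 1) :
    dist (γ u) (γ 0) = u * dist (γ 0) (γ 1) := by
  rw [hγ u hu 0 (left_mem_Icc.2 zero_le_one), sub_zero, abs_of_nonneg hu.1]

theorem IsGeodesic.dist_one (hγ : IsGeodesic γ) (hu : u ∈ Icc (0 : ℝ) 1) :
    dist (γ u) (γ 1) = (1 - u) * dist (γ 0) (γ 1) := by
  rw [hγ u hu 1 (right_mem_Icc.2 zero_le_one), abs_sub_comm, abs_of_nonneg (sub_nonneg.2 hu.2)]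

theorem IsGeodesic.infDist_eq {Z : Set X} (hγ : IsGeodesic γ) {s : ℝ} (hs : s ∈ Icc (0 : ℝ) 1)
    (hu : u ∈ Icc (0 : ℝ) 1) (hsZ : γ s ∈ Z)
    (hZ : ∀ z ∈ Z,
      s * dist (γ 0) (γ 1) ≤ dist z (γ 0) ∧ (1 - s) * dist (γ 0) (γ 1) ≤ dist z (γ 1)) :
    Metric.infDist (γ u) Z = |s - u| * dist (γ 0) (γ 1) := by
  refine le_antisymm ?_ ?_
  · simpa only [hγ u hu s hs, abs_sub_comm] using Metric.infDist_le_dist_of_mem (x := γ u) hsZ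
  refine (Metric.le_infDist ⟨_, hsZ⟩).2 fun z hz => ?_
  obtain ⟨h0, h1⟩ := hZ z hz
  have h0' := dist_triangle_left z (γ 0) (γ u)
  have h1' := dist_triangle_left z (γ 1) (γ u)
  rw [hγ.dist_zero hu] at h0'
  rw [hγ.dist_one hu] at h1'
  rcases le_total u s with hus | hsu
  · rw [abs_of_nonneg (sub_nonneg.2 hus)]; linarith
  · rw [abs_of_nonpos (sub_nonpos.2 hsu)]; linarith

end Geodesic

section KantorovichGeodesic

variable {X : Type*} [MetricSpace X] {φ φc : X → ℝ} {γ : ℝ → X} {s u : ℝ}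

theorem IsKantorovichGeodesic.interpPotential_apply_self (hc : IsCTransform φ φc)
    (hγ : IsKantorovichGeodesic φ φc γ) (hs : s ∈ Icc (0 : ℝ) 1) :
    interpPotential φ s (γ s) = φ (γ 0) - s * dist (γ 0) (γ 1) ^ 2 / 2 := by
  obtain ⟨hgeo, hK⟩ := hγ
  refine le_antisymm ?_ ?_
  · rcases hs.2.eq_or_lt with rfl | hs1
    · rw [hc.interpPotential_one]
      linarith
    have hup := hc.interpPotential_le hs.1 hs1 (γ s) (γ 1)
    have hcost : ((1 - s) * dist (γ 0) (γ 1)) ^ 2 / (2 * (1 - s))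
        = (1 - s) * dist (γ 0) (γ 1) ^ 2 / 2 := by
      field_simp [(sub_pos.2 hs1).ne']
    rw [hgeo.dist_one hs, hcost] at hup
    linarith
  · rcases hs.1.eq_or_lt with rfl | hs0
    · simp [interpPotential]
    have hlow := hc.le_interpPotential hs0 hs.2 (γ s) (γ 0)
    have hcost : (s * dist (γ 0) (γ 1)) ^ 2 / (2 * s) = s * dist (γ 0) (γ 1) ^ 2 / 2 := by
      field_simp [hs0.ne']
    rwa [hgeo.dist_zero hs, hcost] at hlow

theorem IsKantorovichGeodesic.signedDistFn_interpPotential (hc : IsCTransform φ φc)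
    (hγ : IsKantorovichGeodesic φ φc γ) (hs : s ∈ Icc (0 : ℝ) 1) (hu : u ∈ Icc (0 : ℝ) 1) :
    signedDistFn (fun x => interpPotential φ s x - interpPotential φ s (γ s)) (γ u)
      = (s - u) * dist (γ 0) (γ 1) := by
  have hval := hγ.interpPotential_apply_self hc hs
  have hφc : φc (γ 1) = dist (γ 0) (γ 1) ^ 2 / 2 - φ (γ 0) := by linarith [hγ.2]
  set ℓ := dist (γ 0) (γ 1)
  have hℓ : 0 ≤ ℓ := dist_nonneg
  have hlevel : ∀ z ∈ {y | interpPotential φ s y - interpPotential φ s (γ s) = 0},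
      s * ℓ ≤ dist z (γ 0) ∧ (1 - s) * ℓ ≤ dist z (γ 1) := by
    intro z hz
    replace hz : interpPotential φ s z = φ (γ 0) - s * ℓ ^ 2 / 2 := hval ▸ sub_eq_zero.1 hz
    exact ⟨hc.mul_le_dist_of_interpPotential_le hs hℓ hz.le,
      hc.mul_le_dist_of_le_interpPotential hs hℓ (by rw [hφc]; linarith)⟩
  rw [signedDistFn, hγ.1.infDist_eq hs hu (sub_self _) hlevel, hval]
  rcases hℓ.eq_or_lt with hℓ0 | hℓ0
  · simp only [show dist (γ 0) (γ 1) = 0 from hℓ0.symm, ← hℓ0, mul_zero]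
  rcases lt_trichotomy u s with hus | rfl | hsu
  · have hpos : φ (γ 0) - s * ℓ ^ 2 / 2 < interpPotential φ s (γ u) := by
      by_contra! hle
      have := hc.mul_le_dist_of_interpPotential_le hs hℓ hle
      rw [hγ.1.dist_zero hu] at this
      linarith [mul_lt_mul_of_pos_right hus hℓ0]
    rw [Real.sign_of_pos (sub_pos.2 hpos), abs_of_pos (sub_pos.2 hus), one_mul]
  · simp
  · have hneg : interpPotential φ s (γ u) < φ (γ 0) - s * ℓ ^ 2 / 2 := by
      by_contra! hle
      have := hc.mul_le_dist_of_le_interpPotential (z := γ u) hs hℓ (by rw [hφc]; linarith)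
      rw [hγ.1.dist_one hu] at this
      linarith [mul_lt_mul_of_pos_right hsu hℓ0]
    rw [Real.sign_of_neg (sub_neg.2 hneg), abs_of_neg (sub_neg.2 hsu)]
    ring

end KantorovichGeodesic

theorem statement9_general {X : Type*} [MetricSpace X]
    (φ φc : X → ℝ) (hpair : IsKantorovichPair φ φc)
    (γ : ℝ → X) (hγ : IsKantorovichGeodesic φ φc γ)
    (s : ℝ) (hs : s ∈ Set.Icc (0:ℝ) 1)
    (r t : ℝ) (hr : 0 ≤ r) (hrt : r ≤ t) (ht : t ≤ 1) :
    signedDistFn (fun x => interpPotential φ s x - interpPotential φ s (γ s)) (γ r)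
        - signedDistFn (fun x => interpPotential φ s x - interpPotential φ s (γ s)) (γ t)
      = dist (γ r) (γ t) := by
  have hr' : r ∈ Icc (0 : ℝ) 1 := ⟨hr, hrt.trans ht⟩
  have ht' : t ∈ Icc (0 : ℝ) 1 := ⟨hr.trans hrt, ht⟩
  rw [hγ.signedDistFn_interpPotential hpair.1 hs hr',
    hγ.signedDistFn_interpPotential hpair.1 hs ht', hγ.1 r hr' t ht',
    abs_of_nonpos (sub_nonpos.2 hrt)]
  ring

/-- Let `(X,d)` be a geodesic space, `φ` a Kantorovich potential, `γ` a `φ`-Kantorovich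
geodesic and `s ∈ [0,1]`. With `a := φ_s(γ_s)`, `f := φ_s - a` and `d_f` the signed
distance from `{φ_s = a}`, one has `d_f(γ_r) - d_f(γ_t) = d(γ_r,γ_t)` for
`0 ≤ r ≤ t ≤ 1`. -/
theorem statement9 {X : Type*} [MetricSpace X] (hgeo : IsGeodesicSpace X)
    (φ φc : X → ℝ) (hpair : IsKantorovichPair φ φc)
    (γ : ℝ → X) (hγ : IsKantorovichGeodesic φ φc γ)
    (s : ℝ) (hs : s ∈ Set.Icc (0:ℝ) 1)
    (r t : ℝ) (hr : 0 ≤ r) (hrt : r ≤ t) (ht : t ≤ 1) :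
    signedDistFn (fun x => interpPotential φ s x - interpPotential φ s (γ s)) (γ r)
        - signedDistFn (fun x => interpPotential φ s x - interpPotential φ s (γ s)) (γ t)
      = dist (γ r) (γ t) :=
  statement9_general φ φc hpair γ hγ s hs r t hr hrt ht
end
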